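/- arXiv:2605.29660 — 2 statements merged into one kernel-verified Lean document; each statement's English description precedes it below -/
import Mathlib

section
/- For every λ ≥ 0, every natural number j ≥ 1 and every natural number i with i ≠ j: λ·(g(j+1,λ,{i}) − g(j,λ,{i})) ≤ 0. -/
open scoped BigOperators

/-- Poisson pmf: Po(k;lam) = lam^k * e^(-lam) / k!  (with the convention 0^0 = 1). -/
noncomputable def Po (k : ℕ) (lam : ℝ) : ℝ := lam ^ k * Real.exp (-lam) / (Nat.factorial k)

/-- Poisson measure of a set A of naturals: Po(A;lam) = sum over k in A of Po(k;lam). -/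
noncomputable def PoSet (A : Set ℕ) (lam : ℝ) : ℝ := ∑' k : A, Po k lam

/-- The scalar Stein-Chen solution g(j,lam,A), defined recursively by g(0,lam,A) = 0 and
g(j,lam,A) = lam⁻¹ * ((j-1)*g(j-1,lam,A) + 1_A(j-1) - Po(A;lam))
             + (1/j) * 1_{lam=0} * (1_A(0) - 1_A(j)) for j ≥ 1,
with the convention 0⁻¹ = 0. -/
noncomputable def steinChen : ℕ → ℝ → Set ℕ → ℝ
  | 0, _, _ => 0
  | (j + 1), lam, A =>
      lam⁻¹ * ((j : ℝ) * steinChen j lam A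
          + A.indicator (fun _ => (1 : ℝ)) j - PoSet A lam)
        + (1 / ((j : ℝ) + 1)) * (if lam = 0 then (1 : ℝ) else 0)
          * (A.indicator (fun _ => (1 : ℝ)) 0 - A.indicator (fun _ => (1 : ℝ)) (j + 1))

/-!
For `lam ≠ 0` the recursion is solved explicitly: `g(n+1) = n!/lam^(n+1) * S(n+1)` with
`S(n) = ∑_{k<n} lam^k/k! * (1_A(k) - Po(A;lam))` (`steinChenSum`), so `g(j+1) - g(j)` has the
sign of `j * S(j+1) - lam * S(j)`. For `A = {i}`, `S(n)` is `-Po(i) * ∑_{k<n} lam^k/k!` when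
`n ≤ i` and `Po(i) * ∑_{k≥n} lam^k/k!` when `n > i`. Since `i ≠ j`, `S(j)` and `S(j+1)` fall in
the same case, and the comparison follows termwise from `lam * lam^k/k! = (k+1) * lam^(k+1)/(k+1)!`,
with `k + 1 ≤ j` in the partial sums and `k + 1 > j` in the tails.
-/

open Finset Nat

noncomputable def expPartialSum (x : ℝ) (n : ℕ) : ℝ := ∑ k ∈ range n, x ^ k / k !

lemma mul_pow_div_factorial (x : ℝ) (k : ℕ) :
    x * (x ^ k / k !) = (k + 1) * (x ^ (k + 1) / (k + 1)!) := by
  push_cast [Nat.factorial_succ]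
  field_simp
  ring

lemma mul_expPartialSum_le {x : ℝ} (hx : 0 ≤ x) (n : ℕ) :
    x * expPartialSum x n ≤ n * expPartialSum x (n + 1) := by
  unfold expPartialSum
  rw [mul_sum, sum_range_succ', mul_add, mul_sum]
  have hterm : ∀ k ∈ range n, x * (x ^ k / k !) ≤ n * (x ^ (k + 1) / (k + 1)!) := by
    intro k hk
    rw [mul_pow_div_factorial]
    gcongr
    exact_mod_cast mem_range.mp hk
  have hconst : (0 : ℝ) ≤ n * (x ^ 0 / (0 : ℕ)!) := by positivity
  linarith [sum_le_sum hterm]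

lemma hasSum_exp_sub_expPartialSum (x : ℝ) (n : ℕ) :
    HasSum (fun k ↦ x ^ (k + n) / (k + n)!) (Real.exp x - expPartialSum x n) := by
  have hexp : HasSum (fun k ↦ x ^ k / k !) (Real.exp x) :=
    Real.exp_eq_exp_ℝ ▸ NormedSpace.expSeries_div_hasSum_exp x
  exact (hasSum_nat_add_iff' n).mpr hexp

lemma mul_exp_sub_expPartialSum_le {x : ℝ} (hx : 0 ≤ x) (n : ℕ) :
    n * (Real.exp x - expPartialSum x (n + 1)) ≤ x * (Real.exp x - expPartialSum x n) := by
  refine hasSum_le (fun k ↦ ?_) ((hasSum_exp_sub_expPartialSum x (n + 1)).mul_left (n : ℝ))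
    ((hasSum_exp_sub_expPartialSum x n).mul_left x)
  rw [mul_pow_div_factorial, show k + (n + 1) = k + n + 1 by ring]
  gcongr
  push_cast
  linarith [(k.cast_nonneg : (0 : ℝ) ≤ k)]

lemma PoSet_singleton (i : ℕ) (lam : ℝ) : PoSet {i} lam = Po i lam :=
  tsum_singleton i fun k ↦ Po k lam

lemma Po_nonneg {lam : ℝ} (hlam : 0 ≤ lam) (k : ℕ) : 0 ≤ Po k lam := by
  unfold Po
  positivity

lemma Po_mul_exp (k : ℕ) (lam : ℝ) : Po k lam * Real.exp lam = lam ^ k / k ! := by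
  rw [Po, div_mul_eq_mul_div, mul_assoc, ← Real.exp_add, neg_add_cancel, Real.exp_zero, mul_one]

lemma steinChen_succ_of_ne_zero {lam : ℝ} (hlam : lam ≠ 0) (A : Set ℕ) (n : ℕ) :
    steinChen (n + 1) lam A =
      lam⁻¹ * (n * steinChen n lam A + A.indicator (fun _ ↦ 1) n - PoSet A lam) := by
  simp [steinChen, hlam]

noncomputable def steinChenSum (A : Set ℕ) (lam : ℝ) (n : ℕ) : ℝ :=
  ∑ k ∈ range n, lam ^ k / k ! * (A.indicator (fun _ ↦ 1) k - PoSet A lam)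

lemma steinChenSum_succ (A : Set ℕ) (lam : ℝ) (n : ℕ) :
    steinChenSum A lam (n + 1) =
      steinChenSum A lam n + lam ^ n / n ! * (A.indicator (fun _ ↦ 1) n - PoSet A lam) :=
  sum_range_succ _ _

lemma steinChen_succ_eq {lam : ℝ} (hlam : lam ≠ 0) (A : Set ℕ) (n : ℕ) :
    steinChen (n + 1) lam A = n ! / lam ^ (n + 1) * steinChenSum A lam (n + 1) := by
  induction n with
  | zero => rw [steinChen_succ_of_ne_zero hlam]; simp [steinChen, steinChenSum]
  | succ n ih =>
    rw [steinChen_succ_of_ne_zero hlam, ih, steinChenSum_succ A lam (n + 1)]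
    push_cast [Nat.factorial_succ]
    field_simp
    ring

lemma steinChen_succ_succ_sub {lam : ℝ} (hlam : lam ≠ 0) (A : Set ℕ) (n : ℕ) :
    steinChen (n + 2) lam A - steinChen (n + 1) lam A =
      n ! / lam ^ (n + 2) *
        ((n + 1) * steinChenSum A lam (n + 2) - lam * steinChenSum A lam (n + 1)) := by
  rw [steinChen_succ_eq hlam, steinChen_succ_eq hlam]
  push_cast [Nat.factorial_succ]
  field_simp
  ring

lemma steinChenSum_singleton_of_le {i n : ℕ} (h : n ≤ i) (lam : ℝ) :
    steinChenSum {i} lam n = -(Po i lam * expPartialSum lam n) := by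
  rw [steinChenSum, expPartialSum, mul_sum, ← sum_neg_distrib]
  refine sum_congr rfl fun k hk ↦ ?_
  have hki : k ∉ ({i} : Set ℕ) := by have := mem_range.mp hk; simp; omega
  rw [Set.indicator_of_notMem hki, PoSet_singleton, zero_sub, mul_neg, mul_comm]

lemma steinChenSum_singleton_of_lt {i n : ℕ} (h : i < n) (lam : ℝ) :
    steinChenSum {i} lam n = Po i lam * (Real.exp lam - expPartialSum lam n) := by
  rw [steinChenSum, expPartialSum, mul_sub, Po_mul_exp, mul_sum]
  simp only [PoSet_singleton, mul_sub, sum_sub_distrib]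
  congr 1
  · simp [Set.indicator_apply, h]
  · exact sum_congr rfl fun _ _ ↦ mul_comm _ _

lemma mul_steinChenSum_singleton_succ_le {lam : ℝ} (hlam : 0 ≤ lam) {i n : ℕ} (hin : i ≠ n) :
    n * steinChenSum {i} lam (n + 1) ≤ lam * steinChenSum {i} lam n := by
  rcases hin.lt_or_gt with h | h
  · rw [steinChenSum_singleton_of_lt h, steinChenSum_singleton_of_lt (h.trans n.lt_succ_self),
      mul_left_comm, mul_left_comm lam]
    exact mul_le_mul_of_nonneg_left (mul_exp_sub_expPartialSum_le hlam n) (Po_nonneg hlam i)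
  · rw [steinChenSum_singleton_of_le h, steinChenSum_singleton_of_le h.le,
      mul_neg, mul_neg, neg_le_neg_iff, mul_left_comm, mul_left_comm (n : ℝ)]
    exact mul_le_mul_of_nonneg_left (mul_expPartialSum_le hlam n) (Po_nonneg hlam i)

/-- For lam ≥ 0, j ≥ 1 and i ≠ j: lam * (g(j+1,lam,{i}) - g(j,lam,{i})) ≤ 0. -/
theorem steinChen_delta_nonpos (lam : ℝ) (hlam : 0 ≤ lam) (j : ℕ) (hj : 1 ≤ j)
    (i : ℕ) (hij : i ≠ j) :
    lam * (steinChen (j + 1) lam {i} - steinChen j lam {i}) ≤ 0 := by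
  rcases hlam.eq_or_lt with rfl | hpos
  · rw [zero_mul]
  obtain ⟨n, rfl⟩ := Nat.exists_eq_add_of_le' hj
  rw [steinChen_succ_succ_sub hpos.ne']
  have key := mul_steinChenSum_singleton_succ_le hlam hij
  push_cast at key
  exact mul_nonpos_of_nonneg_of_nonpos hlam
    (mul_nonpos_of_nonneg_of_nonpos (by positivity) (sub_nonpos.mpr key))
end

section
/- Let W : Ω → ℕ be measurable with W ≤ n everywhere for some n ∈ ℕ, let H be a nonnegative version of E[W|𝓖], and let A ⊆ ℕ. Then, almost everywhere, E[ H·g(W+1, H, A) − W·g(W, H, A) | 𝓖 ] = ℙ[{W ∈ A}|𝓖] − Po(A;H), where g is evaluated pointwise, i.e. ω ↦ g(W(ω)+1, H(ω), A) and ω ↦ g(W(ω), H(ω), A). -/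
open scoped BigOperators

/-! The function `g` is built so that `λ g(j+1, λ, A) - j g(j, λ, A) = 1_A(j) - Po(A;λ)` holds for
every `j` and every `λ`, so the integrand is pointwise `1_{W ∈ A} - Po(A;H)`. Since `H` is a version
of `E[W|𝓖]`, `Po(A;H)` is a.e. `𝓖`-measurable, and it lies in `[0, 1]`; hence it comes out of the
conditional expectation unchanged. -/

open MeasureTheory

lemma Po_nonneg_s8 {x : ℝ} (hx : 0 ≤ x) (k : ℕ) : 0 ≤ Po k x := by
  unfold Po
  positivity

lemma hasSum_Po (x : ℝ) : HasSum (fun k => Po k x) 1 := by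
  have hexp := (NormedSpace.expSeries_div_hasSum_exp x).mul_right (Real.exp (-x))
  rw [← Real.exp_eq_exp_ℝ, ← Real.exp_add, add_neg_cancel, Real.exp_zero] at hexp
  refine (funext fun k => ?_ : (fun k => Po k x) = _) ▸ hexp
  unfold Po
  ring

lemma PoSet_eq_tsum_indicator (A : Set ℕ) (x : ℝ) :
    PoSet A x = ∑' k, A.indicator (fun k => Po k x) k :=
  tsum_subtype A (fun k => Po k x)

lemma PoSet_zero (A : Set ℕ) : PoSet A 0 = A.indicator 1 0 := by
  rw [PoSet_eq_tsum_indicator, tsum_eq_single 0]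
  · by_cases h : 0 ∈ A <;> simp [Po, h]
  · intro k hk
    simp [Po, zero_pow hk]

lemma PoSet_mem_Icc (A : Set ℕ) {x : ℝ} (hx : 0 ≤ x) : PoSet A x ∈ Set.Icc 0 1 := by
  rw [PoSet_eq_tsum_indicator]
  have hle : ∀ k, A.indicator (fun k => Po k x) k ≤ Po k x :=
    Set.indicator_le_self' fun k _ => Po_nonneg_s8 hx k
  exact ⟨tsum_nonneg fun k => Set.indicator_nonneg (fun k _ => Po_nonneg_s8 hx k) k,
    (Summable.tsum_le_tsum hle ((hasSum_Po x).summable.indicator A) (hasSum_Po x).summable).trans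
      (hasSum_Po x).tsum_eq.le⟩

lemma measurable_PoSet (A : Set ℕ) : Measurable (PoSet A) := by
  have hPo : ∀ k, Measurable fun x => A.indicator (fun k => Po k x) k := fun k => by
    by_cases hk : k ∈ A
    · simp only [Set.indicator_of_mem hk, Po]; fun_prop
    · simp only [Set.indicator_of_notMem hk]; exact measurable_const
  refine measurable_of_tendsto_metrizable (fun N => Finset.measurable_sum (Finset.range N)
    fun k _ => hPo k) (tendsto_pi_nhds.2 fun x => ?_)
  rw [PoSet_eq_tsum_indicator]
  exact ((hasSum_Po x).summable.indicator A).hasSum.tendsto_sum_nat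

lemma mul_steinChen_succ (A : Set ℕ) (lam : ℝ) (j : ℕ) :
    lam * steinChen (j + 1) lam A = j * steinChen j lam A + A.indicator 1 j - PoSet A lam := by
  rcases eq_or_ne lam 0 with rfl | hlam
  -- at `λ = 0` the convention `0⁻¹ = 0` kills the recursion and the `1_{λ=0}` term takes over
  · rw [PoSet_zero]
    cases j with
    | zero => simp [steinChen]
    | succ m =>
      have hm : (m : ℝ) + 1 ≠ 0 := by positivity
      simp only [steinChen, inv_zero, zero_mul, if_true, zero_add]
      push_cast
      field_simp
      rw [Pi.one_def]
      ring
  · simp only [steinChen, hlam, if_false, mul_zero, zero_mul, add_zero, ← mul_assoc,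
      mul_inv_cancel₀ hlam, one_mul]
    rfl

lemma mul_steinChen_succ_sub (A : Set ℕ) (lam : ℝ) (j : ℕ) :
    lam * steinChen (j + 1) lam A - j * steinChen j lam A = A.indicator 1 j - PoSet A lam := by
  rw [mul_steinChen_succ]
  ring

lemma condExp_sub_of_aestronglyMeasurable' {Ω : Type*} {m m₀ : MeasurableSpace Ω}
    {μ : Measure Ω} (hm : m ≤ m₀) [SigmaFinite (μ.trim hm)] {f g : Ω → ℝ}
    (hf : Integrable f μ) (hg : AEStronglyMeasurable[m] g μ) (hgi : Integrable g μ) :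
    μ[f - g | m] =ᵐ[μ] μ[f | m] - g := by
  filter_upwards [condExp_sub hf hgi m, condExp_of_aestronglyMeasurable' hm hg hgi]
    with ω hsub hg
  rw [hsub, Pi.sub_apply, Pi.sub_apply, hg]

theorem condexp_steinChen_recurrence_general
    {Ω : Type*} (𝓖 : MeasurableSpace Ω) [mΩ : MeasurableSpace Ω] (h𝓖 : 𝓖 ≤ mΩ)
    (μ : Measure Ω) [IsProbabilityMeasure μ]
    (W : Ω → ℕ) (hWmeas : Measurable W)
    (H : Ω → ℝ) (hH0 : ∀ ω, 0 ≤ H ω)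
    (hH : H =ᵐ[μ] μ[fun ω => (W ω : ℝ) | 𝓖])
    (A : Set ℕ) :
    μ[fun ω => H ω * steinChen (W ω + 1) (H ω) A
        - (W ω : ℝ) * steinChen (W ω) (H ω) A | 𝓖]
      =ᵐ[μ]
    fun ω => (μ[Set.indicator {ω' | W ω' ∈ A} (fun _ => (1 : ℝ)) | 𝓖]) ω
        - PoSet A (H ω) := by
  have hpointwise : (fun ω => H ω * steinChen (W ω + 1) (H ω) A
      - (W ω : ℝ) * steinChen (W ω) (H ω) A)
      = Set.indicator {ω' | W ω' ∈ A} (fun _ => (1 : ℝ)) - fun ω => PoSet A (H ω) := by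
    ext ω
    rw [mul_steinChen_succ_sub]
    exact congrArg (· - _) (Set.indicator_comp_right W (s := A) (g := 1)).symm
  have hPoH_meas : AEStronglyMeasurable[𝓖] (fun ω => PoSet A (H ω)) μ :=
    ⟨_, ((measurable_PoSet A).comp stronglyMeasurable_condExp.measurable).stronglyMeasurable,
      hH.fun_comp (PoSet A)⟩
  have hPoH_int : Integrable (fun ω => PoSet A (H ω)) μ :=
    .of_bound (hPoH_meas.mono h𝓖) 1 <| ae_of_all _ fun ω => by
      obtain ⟨h0, h1⟩ := PoSet_mem_Icc A (hH0 ω)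
      rwa [Real.norm_eq_abs, abs_of_nonneg h0]
  have hW_int : Integrable (Set.indicator {ω' | W ω' ∈ A} (fun _ => (1 : ℝ))) μ :=
    (integrable_const 1).indicator (hWmeas A.to_countable.measurableSet)
  rw [hpointwise]
  exact condExp_sub_of_aestronglyMeasurable' h𝓖 hW_int hPoH_meas hPoH_int

/-- Scalar instance of Lemma 4.8: if W is a bounded ℕ-valued random variable and H is a
nonnegative version of E[W|𝓖], then, almost everywhere,
E[ H*g(W+1,H,A) - W*g(W,H,A) | 𝓖 ] = P[{W ∈ A}|𝓖] - Po(A;H). -/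
theorem condexp_steinChen_recurrence
    {Ω : Type*} (𝓖 : MeasurableSpace Ω) [mΩ : MeasurableSpace Ω] (h𝓖 : 𝓖 ≤ mΩ)
    (μ : Measure Ω) [IsProbabilityMeasure μ]
    (W : Ω → ℕ) (hWmeas : Measurable W) (n : ℕ) (hWle : ∀ ω, W ω ≤ n)
    (H : Ω → ℝ) (hH0 : ∀ ω, 0 ≤ H ω)
    (hH : H =ᵐ[μ] μ[fun ω => (W ω : ℝ) | 𝓖])
    (A : Set ℕ) :
    μ[fun ω => H ω * steinChen (W ω + 1) (H ω) A
        - (W ω : ℝ) * steinChen (W ω) (H ω) A | 𝓖]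
      =ᵐ[μ]
    fun ω => (μ[Set.indicator {ω' | W ω' ∈ A} (fun _ => (1 : ℝ)) | 𝓖]) ω
        - PoSet A (H ω) :=
  condexp_steinChen_recurrence_general 𝓖 (mΩ := mΩ) h𝓖 μ W hWmeas H hH0 hH A
end
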